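/- arXiv:1209.6006 — 2 statements merged into one kernel-verified Lean document; each statement's English description precedes it below -/
import Mathlib

section
/- Let k ≥ 4. The number of pairs (α^(1), α^(2)) of vectors in F_2^{k+1} such that the associated 2-fold persymmetric 4×k matrix has rank 4 equals 2^{2k+2} − 3·2^{k+4} + 128 = 2^2·(2^k − 2^3)(2^k − 2^2). -/
/-!
Write `a⁻ = (a₀, …, a_{k-1})` and `a⁺ = (a₁, …, a_k)` for the rows of `a`. The matrix of `(a, b)`
has rank 4 iff `a⁻, a⁺` are independent, which fails only for `a ∈ {0, e₀, e_k, 1}`, and none of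
`b⁻, b⁺, b⁻ + b⁺` lies in `W = span(a⁻, a⁺)`. Each of these three conditions fails for exactly
8 vectors `b`, and any two failures imply the third, the common failure set having `2 r(a)`
elements, where `r(a)` counts the recurrences `σ₁ aⱼ + σ₂ aⱼ₊₁ + σ₃ aⱼ₊₂ = 0` satisfied by `a`.
So a good `a` admits `2^{k+1} - 24 + 4 r(a)` vectors `b`. Finally `∑ₐ r(a) = 2^{k+1} + 7 · 4`,
as every nonzero recurrence has a two-dimensional solution space, and the four degenerate
vectors contribute `8 + 4 + 4 + 4` to this sum.
-/

/-- The `n`-fold persymmetric `2n × k` matrix over `F₂` associated to an `n`-tuple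
`α` of vectors in `F₂^{k+1}`: its `(2l-1)`-th row (1-indexed) is
`(α^(l)_1, …, α^(l)_k)` and its `(2l)`-th row is `(α^(l)_2, …, α^(l)_{k+1})`. -/
def persymMatrix (n k : ℕ) (α : Fin n → (Fin (k + 1) → ZMod 2)) :
    Matrix (Fin (2 * n)) (Fin k) (ZMod 2) :=
  Matrix.of fun r j =>
    α ⟨r.val / 2, by have := r.isLt; omega⟩ ⟨j.val + r.val % 2, by have := j.isLt; omega⟩

/-- `Gamma n k i` is the number of `n`-tuples `α ∈ (F₂^{k+1})^n` whose associated
`n`-fold persymmetric `2n × k` matrix has rank `i`. -/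
noncomputable def Gamma (n k i : ℕ) : ℕ :=
  Nat.card {α : Fin n → (Fin (k + 1) → ZMod 2) // (persymMatrix n k α).rank = i}

open Finset

namespace Persym

variable {k : ℕ}

abbrev Vec (k : ℕ) := Fin (k + 1) → ZMod 2

/-- Entries are indexed by `ℕ`, reading `0` past the last index `k`. -/
def entry (a : Vec k) (j : ℕ) : ZMod 2 := if h : j < k + 1 then a ⟨j, h⟩ else 0

lemma entry_of_lt (a : Vec k) {j : ℕ} (h : j < k + 1) : entry a j = a ⟨j, h⟩ := dif_pos h

lemma ext_entry {a b : Vec k} (h : ∀ j < k + 1, entry a j = entry b j) : a = b := by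
  funext i
  simpa only [entry_of_lt _ i.isLt] using h i i.isLt

def ofSeq (k : ℕ) (f : ℕ → ZMod 2) : Vec k := fun i => f i

lemma entry_ofSeq (f : ℕ → ZMod 2) {j : ℕ} (h : j < k + 1) : entry (ofSeq k f) j = f j :=
  entry_of_lt _ h

lemma card_vec : Fintype.card (Vec k) = 2 ^ (k + 1) := by
  simp

lemma zmod_two_cases (x : ZMod 2) : x = 0 ∨ x = 1 := by
  revert x; decide

lemma card_filter_eq_of_param {α ι : Type*} [Fintype α] [Fintype ι] {P : α → Prop}
    [DecidablePred P] (f : ι → α) (hf : Function.Injective f) (hP : ∀ a, P a ↔ ∃ i, f i = a) :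
    #{a | P a} = Fintype.card ι := by
  rw [← card_univ, ← card_map ⟨f, hf⟩]
  congr 1
  ext a
  simp [hP]

def ShiftsIndep (a : Vec k) : Prop :=
  ∀ c₁ c₂ : ZMod 2, (∀ j < k, c₁ * entry a j + c₂ * entry a (j + 1) = 0) → c₁ = 0 ∧ c₂ = 0

def InRowSpan (a : Vec k) (u : ℕ → ZMod 2) : Prop :=
  ∃ c₁ c₂ : ZMod 2, ∀ j < k, u j = c₁ * entry a j + c₂ * entry a (j + 1)

def FullRank (a b : Vec k) : Prop :=
  ∀ c₁ c₂ c₃ c₄ : ZMod 2,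
    (∀ j < k, c₁ * entry a j + c₂ * entry a (j + 1) + c₃ * entry b j + c₄ * entry b (j + 1) = 0) →
    c₁ = 0 ∧ c₂ = 0 ∧ c₃ = 0 ∧ c₄ = 0

def SatisfiesRec (σ : ZMod 2 × ZMod 2 × ZMod 2) (a : Vec k) : Prop :=
  ∀ j < k - 1, σ.1 * entry a j + σ.2.1 * entry a (j + 1) + σ.2.2 * entry a (j + 2) = 0

instance (a : Vec k) : Decidable (ShiftsIndep a) := by unfold ShiftsIndep; infer_instance
instance (a : Vec k) (u : ℕ → ZMod 2) : Decidable (InRowSpan a u) := by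
  unfold InRowSpan; infer_instance
instance (a b : Vec k) : Decidable (FullRank a b) := by unfold FullRank; infer_instance
instance (σ : ZMod 2 × ZMod 2 × ZMod 2) (a : Vec k) : Decidable (SatisfiesRec σ a) := by
  unfold SatisfiesRec; infer_instance

def recCount (a : Vec k) : ℕ := #{σ | SatisfiesRec σ a}

lemma ShiftsIndep.coeff_unique {a : Vec k} (ha : ShiftsIndep a) {c₁ c₂ d₁ d₂ : ZMod 2}
    (h : ∀ j < k, c₁ * entry a j + c₂ * entry a (j + 1) = d₁ * entry a j + d₂ * entry a (j + 1)) :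
    c₁ = d₁ ∧ c₂ = d₂ := by
  obtain ⟨h₁, h₂⟩ := ha (c₁ + d₁) (c₂ + d₂) fun j hj => by grind
  constructor <;> grind

lemma InRowSpan.add {a : Vec k} {u v : ℕ → ZMod 2} (hu : InRowSpan a u) (hv : InRowSpan a v) :
    InRowSpan a (u + v) := by
  obtain ⟨c₁, c₂, hc⟩ := hu
  obtain ⟨d₁, d₂, hd⟩ := hv
  exact ⟨c₁ + d₁, c₂ + d₂, fun j hj => by simp only [Pi.add_apply, hc j hj, hd j hj]; ring⟩

lemma InRowSpan.of_add_left {a : Vec k} {u v : ℕ → ZMod 2} (huv : InRowSpan a (u + v))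
    (hu : InRowSpan a u) : InRowSpan a v := by
  convert hu.add huv using 1
  funext j
  simp only [Pi.add_apply]
  grind

lemma InRowSpan.of_add_right {a : Vec k} {u v : ℕ → ZMod 2} (huv : InRowSpan a (u + v))
    (hv : InRowSpan a v) : InRowSpan a u :=
  (add_comm u v ▸ huv).of_add_left hv

/-- `8 = 4 · 2`: the row space of `a` has four elements, each with two preimages under `Φ`. -/
lemma card_filter_inRowSpan {a : Vec k} (ha : ShiftsIndep a) (Φ : Vec k → ℕ → ZMod 2) (i : ℕ)
    (hexists : ∀ (u : ℕ → ZMod 2) (z : ZMod 2), ∃ b, (∀ j < k, Φ b j = u j) ∧ entry b i = z)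
    (hunique : ∀ b b', (∀ j < k, Φ b j = Φ b' j) → entry b i = entry b' i → b = b') :
    #{b | InRowSpan a (Φ b)} = 8 := by
  choose g hgΦ hgi using hexists
  let f : (ZMod 2 × ZMod 2) × ZMod 2 → Vec k := fun x =>
    g (fun j => x.1.1 * entry a j + x.1.2 * entry a (j + 1)) x.2
  have hf : Function.Injective f := by
    rintro ⟨⟨c₁, c₂⟩, z⟩ ⟨⟨d₁, d₂⟩, w⟩ h
    obtain ⟨rfl, rfl⟩ := ha.coeff_unique fun j hj => by
      simpa only [f, hgΦ _ _ j hj] using congrArg (Φ · j) h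
    rw [show z = w by simpa only [f, hgi] using congrArg (entry · i) h]
  refine card_filter_eq_of_param f hf fun b => ⟨?_, ?_⟩
  · rintro ⟨c₁, c₂, hc⟩
    exact ⟨((c₁, c₂), entry b i), hunique _ _ (fun j hj => by rw [hgΦ _ _ j hj, hc j hj]) (hgi _ _)⟩
  · rintro ⟨⟨⟨c₁, c₂⟩, z⟩, rfl⟩
    exact ⟨c₁, c₂, hgΦ _ _⟩

lemma card_filter_inRowSpan_entry {a : Vec k} (ha : ShiftsIndep a) :
    #{b : Vec k | InRowSpan a (entry b)} = 8 := by
  refine card_filter_inRowSpan ha entry k (fun u z => ?_) (fun b b' h hlast => ext_entry ?_)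
  · refine ⟨ofSeq k fun j => if j < k then u j else z, fun j hj => ?_, ?_⟩
    · rw [entry_ofSeq _ (by omega), if_pos hj]
    · rw [entry_ofSeq _ (by omega), if_neg (lt_irrefl k)]
  · intro j hj
    rcases Nat.lt_or_ge j k with hjk | hjk
    · exact h j hjk
    · rwa [show j = k by omega]

lemma card_filter_inRowSpan_shift {a : Vec k} (ha : ShiftsIndep a) :
    #{b : Vec k | InRowSpan a fun j => entry b (j + 1)} = 8 := by
  refine card_filter_inRowSpan ha (fun b j => entry b (j + 1)) 0 (fun u z => ?_)
    (fun b b' h h0 => ext_entry ?_)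
  · refine ⟨ofSeq k fun j => Nat.casesOn j z fun j => u j, fun j hj => ?_, ?_⟩
    · rw [entry_ofSeq _ (by omega)]
    · rw [entry_ofSeq _ (by omega)]; rfl
  · rintro (_ | j) hj
    exacts [h0, h j (by omega)]

lemma card_filter_inRowSpan_diff {a : Vec k} (ha : ShiftsIndep a) :
    #{b : Vec k | InRowSpan a fun j => entry b j + entry b (j + 1)} = 8 := by
  refine card_filter_inRowSpan ha (fun b j => entry b j + entry b (j + 1)) 0 (fun u z => ?_)
    (fun b b' h h0 => ext_entry ?_)
  · refine ⟨ofSeq k fun j => z + ∑ l ∈ range j, u l, fun j hj => ?_, ?_⟩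
    · rw [entry_ofSeq _ (by omega), entry_ofSeq _ (by omega), sum_range_succ]
      grind
    · rw [entry_ofSeq _ (by omega), sum_range_zero, add_zero]
  · intro j hj
    induction j with
    | zero => exact h0
    | succ j ih =>
      have := h j (by omega)
      grind

/-- The vector `b` with rows `c a⁻ + σ₃ a⁺` and `σ₁ a⁻ + (σ₂ + c) a⁺`, where `a⁻, a⁺` are the rows
of `a`: the two rows of `b` overlap in `k - 1` entries exactly when `a` satisfies `σ`. -/
def twoRowVec (a : Vec k) (σ : ZMod 2 × ZMod 2 × ZMod 2) (c : ZMod 2) : Vec k :=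
  ofSeq k fun j => if j < k then c * entry a j + σ.2.2 * entry a (j + 1)
    else σ.1 * entry a (k - 1) + (σ.2.1 + c) * entry a k

lemma entry_twoRowVec_of_lt (a : Vec k) (σ : ZMod 2 × ZMod 2 × ZMod 2) (c : ZMod 2) {j : ℕ}
    (hj : j < k) : entry (twoRowVec a σ c) j = c * entry a j + σ.2.2 * entry a (j + 1) := by
  rw [twoRowVec, entry_ofSeq _ (by omega), if_pos hj]

lemma entry_twoRowVec_last (a : Vec k) (σ : ZMod 2 × ZMod 2 × ZMod 2) (c : ZMod 2) :
    entry (twoRowVec a σ c) k = σ.1 * entry a (k - 1) + (σ.2.1 + c) * entry a k := by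
  rw [twoRowVec, entry_ofSeq _ (by omega), if_neg (lt_irrefl k)]

lemma entry_twoRowVec_succ {a : Vec k} {σ : ZMod 2 × ZMod 2 × ZMod 2} (hσ : SatisfiesRec σ a)
    (c : ZMod 2) {j : ℕ} (hj : j < k) :
    entry (twoRowVec a σ c) (j + 1) = σ.1 * entry a j + (σ.2.1 + c) * entry a (j + 1) := by
  rcases Nat.lt_or_ge (j + 1) k with hjk | hjk
  · rw [entry_twoRowVec_of_lt a σ c hjk]
    have := hσ j (by omega)
    grind
  · obtain rfl : j = k - 1 := by omega
    rw [Nat.sub_add_cancel (by omega), entry_twoRowVec_last]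

lemma card_filter_inRowSpan_entry_and_shift (hk : 1 ≤ k) {a : Vec k} (ha : ShiftsIndep a) :
    #{b : Vec k | InRowSpan a (entry b) ∧ InRowSpan a fun j => entry b (j + 1)} =
      2 * recCount a := by
  let f : {σ // SatisfiesRec σ a} × ZMod 2 → Vec k := fun x => twoRowVec a x.1 x.2
  have hf : Function.Injective f := by
    rintro ⟨⟨⟨p, q, r⟩, hσ⟩, c⟩ ⟨⟨⟨p', q', r'⟩, hσ'⟩, c'⟩ h
    obtain ⟨rfl, rfl⟩ := ha.coeff_unique fun j hj => by
      simpa only [f, entry_twoRowVec_of_lt _ _ _ hj] using congrArg (entry · j) h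
    obtain ⟨rfl, hq⟩ := ha.coeff_unique fun j hj => by
      simpa only [f, entry_twoRowVec_succ hσ _ hj, entry_twoRowVec_succ hσ' _ hj]
        using congrArg (entry · (j + 1)) h
    obtain rfl : q = q' := add_right_cancel hq
    rfl
  have hcard : Fintype.card ({σ // SatisfiesRec σ a} × ZMod 2) = 2 * recCount a := by
    rw [Fintype.card_prod, Fintype.card_subtype, ZMod.card, mul_comm, recCount]
  rw [← hcard]
  refine card_filter_eq_of_param f hf fun b => ⟨?_, ?_⟩
  · rintro ⟨⟨c₁, c₂, h₁⟩, ⟨d₁, d₂, h₂⟩⟩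
    have hσ : SatisfiesRec (d₁, d₂ + c₁, c₂) a := fun j hj => by
      have := h₁ (j + 1) (by omega)
      have := h₂ j (by omega)
      grind
    refine ⟨(⟨_, hσ⟩, c₁), ext_entry fun j hj => ?_⟩
    rcases Nat.lt_or_ge j k with hjk | hjk
    · rw [entry_twoRowVec_of_lt _ _ _ hjk, h₁ j hjk]
    · have hlast := h₂ (k - 1) (by omega)
      simp only [Nat.sub_add_cancel hk] at hlast
      rw [show j = k by omega, entry_twoRowVec_last, hlast]
      dsimp only
      grind
  · rintro ⟨⟨⟨σ, hσ⟩, c⟩, rfl⟩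
    exact ⟨⟨c, σ.2.2, fun j hj => entry_twoRowVec_of_lt _ _ _ hj⟩,
      ⟨σ.1, σ.2.1 + c, fun j hj => entry_twoRowVec_succ hσ _ hj⟩⟩

lemma not_fullRank_iff {a b : Vec k} (ha : ShiftsIndep a) :
    ¬FullRank a b ↔ InRowSpan a (entry b) ∨ (InRowSpan a fun j => entry b (j + 1)) ∨
      InRowSpan a fun j => entry b j + entry b (j + 1) := by
  constructor
  · intro hb
    simp only [FullRank, not_forall] at hb
    obtain ⟨c₁, c₂, c₃, c₄, hrel, hne⟩ := hb
    rcases zmod_two_cases c₃ with rfl | rfl <;> rcases zmod_two_cases c₄ with rfl | rfl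
    · obtain ⟨rfl, rfl⟩ := ha c₁ c₂ fun j hj => by simpa using hrel j hj
      exact (hne ⟨rfl, rfl, rfl, rfl⟩).elim
    · exact Or.inr <| Or.inl ⟨c₁, c₂, fun j hj => by have := hrel j hj; grind⟩
    · exact Or.inl ⟨c₁, c₂, fun j hj => by have := hrel j hj; grind⟩
    · exact Or.inr <| Or.inr ⟨c₁, c₂, fun j hj => by have := hrel j hj; grind⟩
  · rintro (⟨c₁, c₂, hc⟩ | ⟨c₁, c₂, hc⟩ | ⟨c₁, c₂, hc⟩) hb
    · exact one_ne_zero (hb c₁ c₂ 1 0 fun j hj => by have := hc j hj; grind).2.2.1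
    · exact one_ne_zero (hb c₁ c₂ 0 1 fun j hj => by have := hc j hj; grind).2.2.2
    · exact one_ne_zero (hb c₁ c₂ 1 1 fun j hj => by have := hc j hj; grind).2.2.1

lemma card_filter_fullRank_add (hk : 1 ≤ k) {a : Vec k} (ha : ShiftsIndep a) :
    #{b | FullRank a b} + 24 = 2 ^ (k + 1) + 4 * recCount a := by
  set B₁ := ({b | InRowSpan a (entry b)} : Finset (Vec k))
  set B₂ := ({b | InRowSpan a fun j => entry b (j + 1)} : Finset (Vec k))
  set B₃ := ({b | InRowSpan a fun j => entry b j + entry b (j + 1)} : Finset (Vec k))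
  have hB₁₂ : #(B₁ ∩ B₂) = 2 * recCount a := by
    rw [← filter_and]
    exact card_filter_inRowSpan_entry_and_shift hk ha
  have hB₁₂₃ : (B₁ ∪ B₂) ∩ B₃ = B₁ ∩ B₂ := by
    ext b
    simp only [B₁, B₂, B₃, mem_inter, mem_union, mem_filter, mem_univ, true_and]
    constructor
    · rintro ⟨h₁ | h₂, h₃⟩
      exacts [⟨h₁, h₃.of_add_left h₁⟩, ⟨h₃.of_add_right h₂, h₂⟩]
    · rintro ⟨h₁, h₂⟩
      exact ⟨Or.inl h₁, h₁.add h₂⟩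
  have hunion : ({b | ¬FullRank a b} : Finset (Vec k)) = B₁ ∪ B₂ ∪ B₃ := by
    ext b
    simp only [B₁, B₂, B₃, mem_union, mem_filter, mem_univ, true_and, not_fullRank_iff ha, or_assoc]
  have hsplit : #{b | FullRank a b} + #(B₁ ∪ B₂ ∪ B₃) = 2 ^ (k + 1) := by
    rw [← hunion, card_filter_add_card_filter_not, card_univ, card_vec]
  have h₁₂ := card_union_add_card_inter B₁ B₂
  have h₁₂₃ := card_union_add_card_inter (B₁ ∪ B₂) B₃
  rw [hB₁₂₃, hB₁₂] at h₁₂₃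
  rw [hB₁₂, card_filter_inRowSpan_entry ha, card_filter_inRowSpan_shift ha] at h₁₂
  rw [card_filter_inRowSpan_diff ha] at h₁₂₃
  omega

lemma card_filter_satisfiesRec_eq_four {σ : ZMod 2 × ZMod 2 × ZMod 2}
    (W : ZMod 2 → ZMod 2 → Vec k) (i₁ i₂ : ℕ) (hW : ∀ x y, SatisfiesRec σ (W x y))
    (hW₁ : ∀ x y, entry (W x y) i₁ = x) (hW₂ : ∀ x y, entry (W x y) i₂ = y)
    (hdet : ∀ a, SatisfiesRec σ a → W (entry a i₁) (entry a i₂) = a) :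
    #{a : Vec k | SatisfiesRec σ a} = 4 := by
  have hinj : Function.Injective fun x : ZMod 2 × ZMod 2 => W x.1 x.2 := by
    rintro ⟨x, y⟩ ⟨x', y'⟩ h
    have h₁ := congrArg (entry · i₁) h
    have h₂ := congrArg (entry · i₂) h
    simp only [hW₁, hW₂] at h₁ h₂
    rw [h₁, h₂]
  rw [card_filter_eq_of_param _ hinj fun a =>
    ⟨fun ha => ⟨(entry a i₁, entry a i₂), hdet a ha⟩, fun ⟨x, hx⟩ => hx ▸ hW x.1 x.2⟩]
  simp

def linRec (p q x y : ZMod 2) : ℕ → ZMod 2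
  | 0 => x
  | 1 => y
  | j + 2 => p * linRec p q x y j + q * linRec p q x y (j + 1)

lemma card_filter_satisfiesRec_second_order (hk : 1 ≤ k) (p q : ZMod 2) :
    #{a : Vec k | SatisfiesRec (p, q, 1) a} = 4 := by
  refine card_filter_satisfiesRec_eq_four (fun x y => ofSeq k (linRec p q x y)) 0 1
    (fun x y j hj => ?_) (fun x y => entry_ofSeq _ (by omega))
    (fun x y => entry_ofSeq _ (by omega)) (fun a ha => ext_entry fun j hj => ?_)
  · rw [entry_ofSeq _ (by omega), entry_ofSeq _ (by omega), entry_ofSeq _ (by omega), linRec]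
    grind
  · rw [entry_ofSeq _ hj]
    induction j using Nat.twoStepInduction with
    | zero => rfl
    | one => rfl
    | more j ih₀ ih₁ =>
      have := ha j (by omega)
      rw [linRec, ih₀ (by omega), ih₁ (by omega)]
      grind

lemma card_filter_satisfiesRec_first_order (hk : 1 ≤ k) (p : ZMod 2) :
    #{a : Vec k | SatisfiesRec (p, 1, 0) a} = 4 := by
  refine card_filter_satisfiesRec_eq_four
    (fun x y => ofSeq k fun j => if j = k then y else p ^ j * x) 0 k
    (fun x y j hj => ?_) (fun x y => ?_) (fun x y => ?_) (fun a ha => ext_entry fun j hj => ?_)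
  · rw [entry_ofSeq _ (by omega), entry_ofSeq _ (by omega), if_neg (by omega), if_neg (by omega)]
    grind
  · rw [entry_ofSeq _ (by omega), if_neg (by omega), pow_zero, one_mul]
  · rw [entry_ofSeq _ (by omega), if_pos rfl]
  · rw [entry_ofSeq _ hj]
    split_ifs with hjk
    · rw [hjk]
    · induction j with
      | zero => rw [pow_zero, one_mul]
      | succ j ih =>
        have := ha j (by omega)
        rw [pow_succ, mul_right_comm, ih (by omega) (by omega)]
        grind

lemma card_filter_satisfiesRec_one_zero_zero (hk : 1 ≤ k) :
    #{a : Vec k | SatisfiesRec (1, 0, 0) a} = 4 := by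
  refine card_filter_satisfiesRec_eq_four
    (fun x y => ofSeq k fun j => if j = k - 1 then x else if j = k then y else 0) (k - 1) k
    (fun x y j hj => ?_) (fun x y => ?_) (fun x y => ?_) (fun a ha => ext_entry fun j hj => ?_)
  · rw [entry_ofSeq _ (by omega), if_neg (by omega), if_neg (by omega)]
    ring
  · rw [entry_ofSeq _ (by omega), if_pos rfl]
  · rw [entry_ofSeq _ (by omega), if_neg (by omega), if_pos rfl]
  · rw [entry_ofSeq _ hj]
    split_ifs with h₁ h₂
    · rw [h₁]
    · rw [h₂]
    · have := ha j (by omega)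
      grind

lemma card_filter_satisfiesRec_of_ne_zero (hk : 1 ≤ k) {σ : ZMod 2 × ZMod 2 × ZMod 2}
    (hσ : σ ≠ 0) : #{a : Vec k | SatisfiesRec σ a} = 4 := by
  obtain ⟨p, q, r⟩ := σ
  rcases zmod_two_cases r with rfl | rfl
  · rcases zmod_two_cases q with rfl | rfl
    · obtain rfl : p = 1 := by revert p; decide
      exact card_filter_satisfiesRec_one_zero_zero hk
    · exact card_filter_satisfiesRec_first_order hk p
  · exact card_filter_satisfiesRec_second_order hk p q

lemma sum_recCount (hk : 1 ≤ k) : ∑ a : Vec k, recCount a = 2 ^ (k + 1) + 28 := by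
  have hswap : ∑ a : Vec k, recCount a = ∑ σ, #{a : Vec k | SatisfiesRec σ a} :=
    sum_card_bipartiteAbove_eq_sum_card_bipartiteBelow fun a σ => SatisfiesRec σ a
  have hzero : #{a : Vec k | SatisfiesRec 0 a} = 2 ^ (k + 1) := by
    rw [← card_vec, ← card_univ]
    congr 1
    ext a
    simp [SatisfiesRec]
  rw [hswap, ← add_sum_erase _ _ (mem_univ 0), hzero,
    sum_congr rfl fun σ hσ => card_filter_satisfiesRec_of_ne_zero hk (ne_of_mem_erase hσ)]
  simp

lemma entry_zero (j : ℕ) : entry (0 : Vec k) j = 0 := by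
  unfold entry; split_ifs <;> rfl

lemma entry_one {j : ℕ} (hj : j < k + 1) : entry (1 : Vec k) j = 1 := entry_of_lt _ hj

lemma entry_smul (x : ZMod 2) (a : Vec k) (j : ℕ) : entry (x • a) j = x * entry a j := by
  unfold entry; split_ifs <;> simp

lemma entry_single_zero (j : ℕ) : entry (Pi.single 0 1 : Vec k) j = if j = 0 then 1 else 0 := by
  unfold entry
  split_ifs with h₁ h₂ h₂ <;> simp_all [Pi.single_apply, Fin.ext_iff]

lemma entry_single_last (j : ℕ) :
    entry (Pi.single (Fin.last k) 1 : Vec k) j = if j = k then 1 else 0 := by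
  unfold entry
  split_ifs with h₁ h₂ h₂ <;> simp_all [Pi.single_apply, Fin.ext_iff]

def degenerateVecs (k : ℕ) : Finset (Vec k) := {0, Pi.single 0 1, Pi.single (Fin.last k) 1, 1}

lemma sum_degenerateVecs (hk : 1 ≤ k) {M : Type*} [AddCommMonoid M] (f : Vec k → M) :
    ∑ a ∈ degenerateVecs k, f a =
      f 0 + (f (Pi.single 0 1) + (f (Pi.single (Fin.last k) 1) + f 1)) := by
  have ne_of_entry {a b : Vec k} (j : ℕ) (h : entry a j ≠ entry b j) : a ≠ b := by
    rintro rfl; exact h rfl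
  have one_ne : (1 : ZMod 2) ≠ 0 := one_ne_zero
  have h₁ : (0 : Vec k) ≠ Pi.single 0 1 := ne_of_entry 0 (by simp [entry_zero, entry_single_zero])
  have h₂ : (0 : Vec k) ≠ Pi.single (Fin.last k) 1 :=
    ne_of_entry k (by simp [entry_zero, entry_single_last])
  have h₃ : (0 : Vec k) ≠ 1 := ne_of_entry 0 (by simp [entry_zero, entry_one])
  have h₄ : (Pi.single 0 1 : Vec k) ≠ Pi.single (Fin.last k) 1 :=
    ne_of_entry 0 (by simp [entry_single_zero, entry_single_last]; omega)
  have h₅ : (Pi.single 0 1 : Vec k) ≠ 1 :=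
    ne_of_entry 1 (by simp [entry_single_zero, entry_one (show 1 < k + 1 by omega)])
  have h₆ : (Pi.single (Fin.last k) 1 : Vec k) ≠ 1 :=
    ne_of_entry 0 (by simp [entry_single_last, entry_one]; omega)
  rw [degenerateVecs, sum_insert (by simp [h₁, h₂, h₃]), sum_insert (by simp [h₄, h₅]),
    sum_insert (by simp [h₆]), sum_singleton]

lemma mem_degenerateVecs_of_eq_smul {a : Vec k} (v : Vec k) (hv : v ∈ degenerateVecs k)
    (x : ZMod 2) (ha : a = x • v) : a ∈ degenerateVecs k := by
  rcases zmod_two_cases x with rfl | rfl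
  · simp [ha, degenerateVecs]
  · rwa [ha, one_smul]

lemma not_shiftsIndep_iff (a : Vec k) : ¬ShiftsIndep a ↔ a ∈ degenerateVecs k := by
  constructor
  · intro ha
    simp only [ShiftsIndep, not_forall] at ha
    obtain ⟨c₁, c₂, hrel, hne⟩ := ha
    rcases zmod_two_cases c₁ with rfl | rfl <;> rcases zmod_two_cases c₂ with rfl | rfl
    · exact (hne ⟨rfl, rfl⟩).elim
    · refine mem_degenerateVecs_of_eq_smul (Pi.single 0 1) (by simp [degenerateVecs]) (entry a 0)
        (ext_entry fun j hj => ?_)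
      rw [entry_smul, entry_single_zero]
      rcases j with _ | j
      · simp
      · simpa using hrel j (by omega)
    · refine mem_degenerateVecs_of_eq_smul (Pi.single (Fin.last k) 1) (by simp [degenerateVecs])
        (entry a k) (ext_entry fun j hj => ?_)
      rw [entry_smul, entry_single_last]
      split_ifs with hjk
      · rw [hjk, mul_one]
      · simpa using hrel j (by omega)
    · refine mem_degenerateVecs_of_eq_smul 1 (by simp [degenerateVecs]) (entry a 0)
        (ext_entry fun j hj => ?_)
      rw [entry_smul, entry_one hj, mul_one]
      induction j with
      | zero => rfl
      | succ j ih =>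
        have := hrel j (by omega)
        rw [← ih (by omega)]
        grind
  · have key {c₁ c₂ : ZMod 2} (hc : c₁ ≠ 0 ∨ c₂ ≠ 0)
        (h : ∀ j < k, c₁ * entry a j + c₂ * entry a (j + 1) = 0) : ¬ShiftsIndep a :=
      fun ha => by grind [ha c₁ c₂ h]
    simp only [degenerateVecs, mem_insert, mem_singleton]
    rintro (rfl | rfl | rfl | rfl)
    · exact key (c₁ := 1) (c₂ := 0) (by simp) fun j _ => by simp [entry_zero]
    · exact key (c₁ := 0) (c₂ := 1) (by simp) fun j _ => by simp [entry_single_zero]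
    · exact key (c₁ := 1) (c₂ := 0) (by simp) fun j hj => by simp [entry_single_last]; omega
    · exact key (c₁ := 1) (c₂ := 1) (by simp) fun j hj => by
        rw [entry_one (by omega), entry_one (by omega)]; decide

lemma recCount_eq_of_iff {a : Vec k} (P : ZMod 2 × ZMod 2 × ZMod 2 → Prop) [DecidablePred P]
    (h : ∀ σ, SatisfiesRec σ a ↔ P σ) : recCount a = #{σ | P σ} := by
  rw [recCount, filter_congr fun σ _ => h σ]

lemma recCount_zero : recCount (0 : Vec k) = 8 := by
  rw [recCount_eq_of_iff (fun _ => True) fun σ => by simp [SatisfiesRec, entry_zero]]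
  rfl

lemma recCount_single_zero (hk : 2 ≤ k) : recCount (Pi.single 0 1 : Vec k) = 4 := by
  rw [recCount_eq_of_iff (fun σ => σ.1 = 0) fun σ => ⟨fun h => ?_, fun h j hj => ?_⟩]
  · rfl
  · simpa [entry_single_zero] using h 0 (by omega)
  · simp [entry_single_zero, h]

lemma recCount_single_last (hk : 2 ≤ k) : recCount (Pi.single (Fin.last k) 1 : Vec k) = 4 := by
  rw [recCount_eq_of_iff (fun σ => σ.2.2 = 0) fun σ => ⟨fun h => ?_, fun h j hj => ?_⟩]
  · rfl
  · simpa [entry_single_last, show k - 2 + 2 = k by omega, show k - 2 ≠ k by omega,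
      show k - 2 + 1 ≠ k by omega] using h (k - 2) (by omega)
  · simp [entry_single_last, h, show j ≠ k by omega, show j + 1 ≠ k by omega]

lemma recCount_one (hk : 2 ≤ k) : recCount (1 : Vec k) = 4 := by
  rw [recCount_eq_of_iff (fun σ => σ.1 + σ.2.1 + σ.2.2 = 0)
    fun σ => ⟨fun h => ?_, fun h j hj => ?_⟩]
  · rfl
  · simpa [entry_one, show 1 < k + 1 by omega, show 2 < k + 1 by omega] using h 0 (by omega)
  · simpa [entry_one, show j < k + 1 by omega, show j + 1 < k + 1 by omega,
      show j + 2 < k + 1 by omega] using h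

lemma rank_persymMatrix_eq_four_iff (α : Fin 2 → Vec k) :
    (persymMatrix 2 k α).rank = 4 ↔ FullRank (α 0) (α 1) := by
  set M : Matrix (Fin 4) (Fin k) (ZMod 2) := persymMatrix 2 k α
  have hcomb (g : Fin 4 → ZMod 2) (j : Fin k) : (∑ i, g i • M.row i) j =
      g 0 * entry (α 0) j + g 1 * entry (α 0) (j + 1) + g 2 * entry (α 1) j +
        g 3 * entry (α 1) (j + 1) := by
    simp only [Finset.sum_apply, Fin.sum_univ_four, Pi.smul_apply, smul_eq_mul, Matrix.row]
    rw [entry_of_lt _ (by omega), entry_of_lt _ (by omega), entry_of_lt _ (by omega),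
      entry_of_lt _ (by omega)]
    rfl
  change M.rank = 4 ↔ _
  have hindep : M.rank = 4 ↔ LinearIndependent (ZMod 2) M.row := by
    rw [M.rank_eq_finrank_span_row, linearIndependent_iff_card_eq_finrank_span]
    simp [Set.finrank, eq_comm]
  rw [hindep, Fintype.linearIndependent_iff]
  constructor
  · intro h c₁ c₂ c₃ c₄ hrel
    have := h ![c₁, c₂, c₃, c₄] (funext fun j => by simpa [hcomb] using hrel j j.isLt)
    exact ⟨this 0, this 1, this 2, this 3⟩
  · intro h g hg
    obtain ⟨h₀, h₁, h₂, h₃⟩ := h (g 0) (g 1) (g 2) (g 3) fun j hj => by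
      simpa [hcomb] using congrFun hg ⟨j, hj⟩
    intro i
    fin_cases i
    exacts [h₀, h₁, h₂, h₃]

lemma gamma_two_four_eq_sum : Gamma 2 k 4 = ∑ a : Vec k, #{b | FullRank a b} := by
  rw [Gamma, Nat.card_eq_fintype_card, Fintype.card_congr
    ((Equiv.subtypeEquiv (piFinTwoEquiv fun _ => Vec k) rank_persymMatrix_eq_four_iff).trans
      (Equiv.subtypeProdEquivSigmaSubtype FullRank)), Fintype.card_sigma]
  exact sum_congr rfl fun a _ => Fintype.card_subtype _

lemma FullRank.shiftsIndep {a b : Vec k} (h : FullRank a b) : ShiftsIndep a := fun c₁ c₂ hrel =>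
  let ⟨h₁, h₂, _⟩ := h c₁ c₂ 0 0 fun j hj => by simp [hrel j hj]
  ⟨h₁, h₂⟩

lemma filter_not_shiftsIndep : ({a | ¬ShiftsIndep a} : Finset (Vec k)) = degenerateVecs k := by
  ext a
  simp [not_shiftsIndep_iff]

lemma card_filter_shiftsIndep_add (hk : 1 ≤ k) :
    #{a : Vec k | ShiftsIndep a} + 4 = 2 ^ (k + 1) := by
  rw [← card_vec, ← card_univ, ← card_filter_add_card_filter_not (s := univ) ShiftsIndep,
    filter_not_shiftsIndep, card_eq_sum_ones (degenerateVecs k), sum_degenerateVecs hk]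
  rfl

lemma sum_recCount_filter_shiftsIndep_add (hk : 2 ≤ k) :
    ∑ a ∈ {a : Vec k | ShiftsIndep a}, recCount a + 20 = 2 ^ (k + 1) + 28 := by
  rw [← sum_recCount (by omega), ← sum_filter_add_sum_filter_not univ ShiftsIndep,
    filter_not_shiftsIndep, sum_degenerateVecs (by omega), recCount_zero, recCount_single_zero hk,
    recCount_single_last hk, recCount_one hk]
  rfl

lemma gamma_two_four_add (hk : 1 ≤ k) :
    Gamma 2 k 4 + 24 * #{a : Vec k | ShiftsIndep a} =
      2 ^ (k + 1) * #{a : Vec k | ShiftsIndep a} +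
        4 * ∑ a ∈ {a : Vec k | ShiftsIndep a}, recCount a := by
  have hΓ : Gamma 2 k 4 = ∑ a ∈ {a : Vec k | ShiftsIndep a}, #{b | FullRank a b} := by
    rw [gamma_two_four_eq_sum, ← sum_filter_add_sum_filter_not univ ShiftsIndep, add_eq_left]
    exact sum_eq_zero fun a ha => card_eq_zero.2 <| filter_eq_empty_iff.2 fun b _ hb =>
      (mem_filter.1 ha).2 hb.shiftsIndep
  rw [hΓ, mul_comm 24, ← smul_eq_mul, ← sum_const, ← sum_add_distrib,
    sum_congr rfl fun a ha => card_filter_fullRank_add hk (mem_filter.1 ha).2,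
    sum_add_distrib, sum_const, smul_eq_mul, mul_comm, mul_sum]

theorem gamma_two_four (hk : 2 ≤ k) :
    (Gamma 2 k 4 : ℤ) = 2 ^ (2 * k + 2) - 3 * 2 ^ (k + 4) + 128 := by
  have hcount : ((Gamma 2 k 4 : ℕ) : ℤ) + 24 * #{a : Vec k | ShiftsIndep a} =
      2 ^ (k + 1) * #{a : Vec k | ShiftsIndep a} +
        4 * ((∑ a ∈ {a : Vec k | ShiftsIndep a}, recCount a : ℕ) : ℤ) := by
    exact_mod_cast gamma_two_four_add (by omega)
  have hrec :
      ((∑ a ∈ {a : Vec k | ShiftsIndep a}, recCount a : ℕ) : ℤ) + 20 = 2 ^ (k + 1) + 28 := by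
    exact_mod_cast sum_recCount_filter_shiftsIndep_add hk
  have hgood : (#{a : Vec k | ShiftsIndep a} : ℤ) + 4 = 2 ^ (k + 1) := by
    exact_mod_cast card_filter_shiftsIndep_add (by omega)
  linear_combination hcount + 4 * hrec + (2 ^ (k + 1) - 24 : ℤ) * hgood

end Persym

theorem stmt4 (k : ℕ) (hk : 4 ≤ k) :
    (Gamma 2 k 4 : ℤ) = 2 ^ (2 * k + 2) - 3 * 2 ^ (k + 4) + 128 ∧
      (2 ^ (2 * k + 2) - 3 * 2 ^ (k + 4) + 128 : ℤ) =
        2 ^ 2 * (2 ^ k - 2 ^ 3) * (2 ^ k - 2 ^ 2) :=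
  ⟨Persym.gamma_two_four (by omega), by ring⟩
end

section
/- Let n ≥ 4 and k = 10. The number of n-tuples (α^(1),…,α^(n)) of vectors in F_2^{11} such that the associated n-fold persymmetric 2n×10 matrix has rank 8 equals 511·2^{8n} + 171955·2^{7n} − 897890·2^{6n} − 38376240·2^{5n} + 323250144·2^{4n} + 271514880·2^{3n} − 436135·2^{14}·2^{2n} + 242795·2^{16}·2^n − 4445·2^{21}. -/
/-!
Write `u j := (α^(l)_j)_l ∈ V := F₂ⁿ`. The columns of `M(α)` are the consecutive pairs
`(u j, u (j+1)) ∈ V × V`, so its rank is the dimension of their span `P(u)`. Prepending a vector `x`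
to `u` changes the triple `(dim span u, dim P(u), [u 0 ∈ span (u 1, …)])` according to whether
`(x, u 0) ∈ P(u)` and whether `x ∈ span u`. The `x` of the first kind form a coset of
`{y | (y, 0) ∈ P(u)}` (or nothing), those of the second kind a subspace, and both sizes are powers
of `2` read off from the triple. Counting sequences by their triple therefore gives a transfer
recursion whose values are polynomials in `|V| = 2ⁿ`; running it for `k = 10`, `i = 8` gives the
polynomial of the theorem.
-/

open Module Submodule Set

theorem Fintype.sum_ite_ite_of_imp {α R : Type*} [Fintype α] [CommRing R] {p q : α → Prop}
    [DecidablePred p] [DecidablePred q] (hpq : ∀ a, p a → q a) (A B C : R) :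
    ∑ a, (if p a then A else if q a then B else C) =
      Nat.card {a // p a} * A + (Nat.card {a // q a} - Nat.card {a // p a} : R) * B +
        (Nat.card α - Nat.card {a // q a} : R) * C := by
  have split : ∀ a, (if p a then A else if q a then B else C) =
      (if p a then A - B else 0) + (if q a then B - C else 0) + C := by
    intro a
    by_cases hp : p a
    · simp [hp, hpq a hp]
    · by_cases hq : q a <;> simp [hp, hq]
  simp only [split, Finset.sum_add_distrib, Finset.sum_ite, Finset.sum_const_zero, Finset.sum_const,
    Nat.card_eq_fintype_card, Fintype.card_subtype, nsmul_eq_mul, Finset.card_univ]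
  ring

def addCoeffs : List ℤ → List ℤ → List ℤ
  | [], p => p
  | a :: p, [] => a :: p
  | a :: p, b :: p' => (a + b) :: addCoeffs p p'

def evalCoeffs (x : ℤ) : List ℤ → ℤ
  | [] => 0
  | a :: p => a + x * evalCoeffs x p

def mulXSubCoeffs (a : ℤ) (p : List ℤ) : List ℤ := addCoeffs (0 :: p) (p.map (-a * ·))

theorem evalCoeffs_addCoeffs (x : ℤ) :
    ∀ p p' : List ℤ, evalCoeffs x (addCoeffs p p') = evalCoeffs x p + evalCoeffs x p'
  | [], _ => by simp [addCoeffs, evalCoeffs]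
  | _ :: _, [] => by simp [addCoeffs, evalCoeffs]
  | a :: p, b :: p' => by simp only [addCoeffs, evalCoeffs, evalCoeffs_addCoeffs x p p']; ring

theorem evalCoeffs_map_mul (x a : ℤ) (p : List ℤ) :
    evalCoeffs x (p.map (a * ·)) = a * evalCoeffs x p := by
  induction p with
  | nil => simp [evalCoeffs]
  | cons b p ih => simp only [List.map_cons, evalCoeffs, ih]; ring

theorem evalCoeffs_mulXSubCoeffs (x a : ℤ) (p : List ℤ) :
    evalCoeffs x (mulXSubCoeffs a p) = (x - a) * evalCoeffs x p := by
  simp only [mulXSubCoeffs, evalCoeffs_addCoeffs, evalCoeffs, evalCoeffs_map_mul]; ring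

/-- `evalCoeffs |V| (transferPoly |K| i r s)` counts the `r`-tuples of vectors whose prepending to a
sequence with `rankState` `s` yields a sequence whose `pairSpan` has dimension `i`. Polynomials in
`|V|` are coefficient lists, constant term first. In a reachable state `(c, d, true)`, `d - c` is
the dimension of `{y | (y, 0) ∈ pairSpan}`. -/
def transferPoly (q : ℤ) (i : ℕ) : ℕ → ℕ × ℕ × Bool → List ℤ
  | 0, (_, d, _) => if d = i then [1] else []
  | r + 1, (c, d, true) =>
      addCoeffs ((transferPoly q i r (c, d, true)).map (q ^ (d - c) * ·))
        (addCoeffs ((transferPoly q i r (c, d + 1, true)).map ((q ^ c - q ^ (d - c)) * ·))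
          (mulXSubCoeffs (q ^ c) (transferPoly q i r (c + 1, d + 1, false))))
  | r + 1, (c, d, false) =>
      addCoeffs ((transferPoly q i r (c, d + 1, true)).map (q ^ c * ·))
        (mulXSubCoeffs (q ^ c) (transferPoly q i r (c + 1, d + 1, false)))

section PairSpan

variable {K V : Type*} [Field K] [AddCommGroup V] [Module K V]

variable (K) in
def pairSpan {m : ℕ} (u : Fin (m + 1) → V) : Submodule K (V × V) :=
  span K (range fun j : Fin m => (u j.castSucc, u j.succ))

theorem pairSpan_cons {m : ℕ} (x : V) (u : Fin (m + 1) → V) :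
    pairSpan K (Fin.cons x u) = span K {(x, u 0)} ⊔ pairSpan K u := by
  have : (range fun j : Fin (m + 1) => ((Fin.cons x u : Fin (m + 2) → V) j.castSucc,
      (Fin.cons x u : Fin (m + 2) → V) j.succ)) =
      insert (x, u 0) (range fun j : Fin m => (u j.castSucc, u j.succ)) := by
    rw [← Fin.range_cons]
    congr 1
    funext j
    refine Fin.cases rfl (fun j => ?_) j
    simp
  rw [pairSpan, this, span_insert, pairSpan]

theorem map_snd_pairSpan {m : ℕ} (u : Fin (m + 1) → V) :
    (pairSpan K u).map (LinearMap.snd K V V) = span K (range (Fin.tail u)) := by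
  rw [pairSpan, map_span, ← range_comp]
  rfl

theorem snd_mem_span_tail_of_mem_pairSpan {m : ℕ} {u : Fin (m + 1) → V} {p : V × V}
    (hp : p ∈ pairSpan K u) : p.2 ∈ span K (range (Fin.tail u)) :=
  map_snd_pairSpan (K := K) u ▸ ⟨p, hp, rfl⟩

theorem fst_mem_span_of_mem_pairSpan {m : ℕ} {u : Fin (m + 1) → V} {p : V × V}
    (hp : p ∈ pairSpan K u) : p.1 ∈ span K (range u) := by
  have : (pairSpan K u).map (LinearMap.fst K V V) ≤ span K (range u) := by
    rw [pairSpan, map_span, span_le]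
    rintro _ ⟨_, ⟨j, rfl⟩, rfl⟩
    exact subset_span ⟨j.castSucc, rfl⟩
  exact this ⟨p, hp, rfl⟩

open scoped Classical in
theorem finrank_span_singleton_sup [Module.Finite K V] (p : Submodule K V) (v : V) :
    finrank K ↥(span K {v} ⊔ p) = finrank K p + if v ∈ p then 0 else 1 := by
  split_ifs with hv
  · rw [sup_eq_right.mpr ((span_singleton_le_iff_mem v p).mpr hv), add_zero]
  · rw [sup_comm, finrank_sup_span_singleton hv]

theorem finrank_map_snd_add_finrank_comap_inl {W : Type*} [AddCommGroup W] [Module K W]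
    [Module.Finite K V] [Module.Finite K W] (P : Submodule K (V × W)) :
    finrank K (P.map (LinearMap.snd K V W)) + finrank K (P.comap (LinearMap.inl K V W)) =
      finrank K P := by
  let f := (LinearMap.snd K V W).domRestrict P
  let e : P.comap (LinearMap.inl K V W) ≃ₗ[K] LinearMap.ker f :=
    { toFun := fun y => ⟨⟨(y.1, 0), y.2⟩, rfl⟩
      invFun := fun p => ⟨p.1.1.1, by
        have hp : p.1.1.2 = 0 := p.2
        change (p.1.1.1, (0 : W)) ∈ P
        rw [← hp]
        exact p.1.2⟩
      map_add' := fun _ _ => by ext <;> simp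
      map_smul' := fun _ _ => by ext <;> simp
      left_inv := fun _ => rfl
      right_inv := fun p => by
        have hp : p.1.1.2 = 0 := p.2
        ext <;> simp [hp] }
  rw [← LinearMap.range_domRestrict, e.finrank_eq]
  exact LinearMap.finrank_range_add_finrank_ker f

theorem span_range_eq_span_range_tail {m : ℕ} {u : Fin (m + 1) → V}
    (h : u 0 ∈ span K (range (Fin.tail u))) : span K (range u) = span K (range (Fin.tail u)) := by
  conv_lhs => rw [← Fin.cons_self_tail u, Fin.range_cons]
  exact span_insert_eq_span h

variable (K) in
open scoped Classical in
noncomputable def rankState {m : ℕ} (u : Fin (m + 1) → V) : ℕ × ℕ × Bool :=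
  (finrank K (span K (range u)), finrank K (pairSpan K u),
    decide (u 0 ∈ span K (range (Fin.tail u))))

open scoped Classical in
theorem rankState_cons [Module.Finite K V] {m : ℕ} (x : V) (u : Fin (m + 1) → V) :
    rankState K (Fin.cons x u) =
      if (x, u 0) ∈ pairSpan K u then ((rankState K u).1, (rankState K u).2.1, true)
      else if x ∈ span K (range u) then ((rankState K u).1, (rankState K u).2.1 + 1, true)
      else ((rankState K u).1 + 1, (rankState K u).2.1 + 1, false) := by
  rw [rankState, rankState, Fin.range_cons, span_insert, finrank_span_singleton_sup,
    pairSpan_cons, finrank_span_singleton_sup]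
  by_cases h₁ : (x, u 0) ∈ pairSpan K u
  · simp [h₁, fst_mem_span_of_mem_pairSpan h₁]
  · by_cases h₂ : x ∈ span K (range u) <;> simp [h₁, h₂]

theorem natCard_slice_pairSpan [Finite K] [Module.Finite K V] {m : ℕ} (u : Fin (m + 1) → V) :
    Nat.card {x : V // (x, u 0) ∈ pairSpan K u} =
      if (rankState K u).2.2 then Nat.card K ^ ((rankState K u).2.1 - (rankState K u).1)
      else 0 := by
  classical
  by_cases h : u 0 ∈ span K (range (Fin.tail u))
  · have hb : (rankState K u).2.2 = true := decide_eq_true h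
    rw [if_pos hb]
    change _ = _ ^ (finrank K (pairSpan K u) - finrank K (span K (range u)))
    rw [span_range_eq_span_range_tail h, ← map_snd_pairSpan,
      ← finrank_map_snd_add_finrank_comap_inl, Nat.add_sub_cancel_left]
    rw [← map_snd_pairSpan] at h
    obtain ⟨⟨y, _⟩, hy, rfl⟩ := h
    have e : {x : V // (x, u 0) ∈ pairSpan K u} ≃ (pairSpan K u).comap (LinearMap.inl K V V) :=
      (Equiv.subRight y).subtypeEquiv fun x => by
        rw [← sub_mem_iff_left _ hy, Prod.mk_sub_mk, sub_self]
        rfl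
    rw [Nat.card_congr e, Module.natCard_eq_pow_finrank (K := K)]
  · have hb : (rankState K u).2.2 = false := decide_eq_false h
    rw [hb, if_neg Bool.false_ne_true, Nat.card_eq_zero]
    exact Or.inl ⟨fun x => h (snd_mem_span_tail_of_mem_pairSpan x.2)⟩

theorem sum_transferPoly_cons [Finite K] [Fintype V] (i r : ℕ) {m : ℕ} (u : Fin (m + 1) → V) :
    ∑ x : V, evalCoeffs (Nat.card V) (transferPoly (Nat.card K) i r (rankState K (Fin.cons x u))) =
      evalCoeffs (Nat.card V) (transferPoly (Nat.card K) i (r + 1) (rankState K u)) := by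
  classical
  have hspan : Nat.card {x // x ∈ span K (range u)} = Nat.card K ^ (rankState K u).1 :=
    Module.natCard_eq_pow_finrank
  simp only [rankState_cons, apply_ite (transferPoly _ _ _), apply_ite (evalCoeffs _)]
  rw [Fintype.sum_ite_ite_of_imp (p := fun x => (x, u 0) ∈ pairSpan K u)
    (q := fun x => x ∈ span K (range u)) (fun x => fst_mem_span_of_mem_pairSpan), hspan,
    natCard_slice_pairSpan]
  obtain ⟨c, d, _ | _⟩ := rankState K u <;>
  · simp only [transferPoly, evalCoeffs_addCoeffs, evalCoeffs_map_mul, evalCoeffs_mulXSubCoeffs]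
    push_cast
    ring

theorem sum_transferPoly_succ [Finite K] [Fintype V] (i r m : ℕ) :
    ∑ u : Fin (m + 2) → V, evalCoeffs (Nat.card V) (transferPoly (Nat.card K) i r (rankState K u)) =
      ∑ u : Fin (m + 1) → V,
        evalCoeffs (Nat.card V) (transferPoly (Nat.card K) i (r + 1) (rankState K u)) := by
  rw [← (Fin.consEquiv fun _ => V).sum_comp, Fintype.sum_prod_type_right]
  exact Finset.sum_congr rfl fun u _ => sum_transferPoly_cons i r u

theorem sum_transferPoly_eq_sum_fin_one [Finite K] [Fintype V] (i r m : ℕ) :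
    ∑ u : Fin (m + 1) → V, evalCoeffs (Nat.card V) (transferPoly (Nat.card K) i r (rankState K u)) =
      ∑ u : Fin 1 → V,
        evalCoeffs (Nat.card V) (transferPoly (Nat.card K) i (r + m) (rankState K u)) := by
  induction m generalizing r with
  | zero => rfl
  | succ m ih => rw [sum_transferPoly_succ, ih, Nat.add_right_comm, Nat.add_assoc]

theorem rankState_fin_one [DecidableEq V] (u : Fin 1 → V) :
    rankState K u = if u 0 = 0 then (0, 0, true) else (1, 0, false) := by
  have hrange : range u = {u 0} := range_unique
  have hpair : pairSpan K u = ⊥ := by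
    rw [pairSpan, range_eq_empty, span_empty]
  have htail : span K (range (Fin.tail u)) = ⊥ := by
    rw [range_eq_empty, span_empty]
  rw [rankState, hrange, hpair, htail, finrank_bot, mem_bot]
  split_ifs with h
  · rw [h, span_zero_singleton, finrank_bot]
    simp
  · rw [finrank_span_singleton h]
    simp [h]

theorem sum_fin_one_transferPoly [Finite K] [Fintype V] (i r : ℕ) :
    ∑ u : Fin 1 → V, evalCoeffs (Nat.card V) (transferPoly (Nat.card K) i r (rankState K u)) =
      evalCoeffs (Nat.card V) (transferPoly (Nat.card K) i r (0, 0, true)) +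
        (Nat.card V - 1) * evalCoeffs (Nat.card V) (transferPoly (Nat.card K) i r (1, 0, false)) := by
  let _ : DecidableEq V := Classical.decEq V
  rw [Fintype.sum_equiv (Equiv.funUnique (Fin 1) V) _ (fun v => evalCoeffs (Nat.card V)
    (transferPoly (Nat.card K) i r (if v = 0 then (0, 0, true) else (1, 0, false))))
    fun u => by rw [rankState_fin_one]; rfl]
  simp only [apply_ite (transferPoly _ _ _), apply_ite (evalCoeffs _)]
  rw [Finset.sum_ite, Finset.sum_const, Finset.sum_const]
  have hpos : 1 ≤ Fintype.card V := Fintype.card_pos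
  simp [Finset.filter_eq', Finset.filter_ne', Nat.card_eq_fintype_card, Nat.cast_sub hpos]

def countPoly (q : ℤ) (i m : ℕ) : List ℤ :=
  addCoeffs (transferPoly q i m (0, 0, true)) (mulXSubCoeffs 1 (transferPoly q i m (1, 0, false)))

theorem natCard_finrank_pairSpan_eq [Finite K] [Fintype V] (i m : ℕ) :
    (Nat.card {u : Fin (m + 1) → V // finrank K (pairSpan K u) = i} : ℤ) =
      evalCoeffs (Nat.card V) (countPoly (Nat.card K) i m) := by
  classical
  have base : ∀ u : Fin (m + 1) → V,
      evalCoeffs (Nat.card V) (transferPoly (Nat.card K) i 0 (rankState K u)) =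
        if finrank K (pairSpan K u) = i then 1 else 0 := by
    intro u
    by_cases h : finrank K (pairSpan K u) = i <;> simp [rankState, transferPoly, h, evalCoeffs]
  calc (Nat.card {u : Fin (m + 1) → V // finrank K (pairSpan K u) = i} : ℤ)
      = ∑ u : Fin (m + 1) → V,
          evalCoeffs (Nat.card V) (transferPoly (Nat.card K) i 0 (rankState K u)) := by
        rw [Finset.sum_congr rfl fun u _ => base u, Finset.sum_boole, Nat.card_eq_fintype_card,
          Fintype.card_subtype]
    _ = _ := by
        rw [sum_transferPoly_eq_sum_fin_one, zero_add, sum_fin_one_transferPoly, countPoly,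
          evalCoeffs_addCoeffs, evalCoeffs_mulXSubCoeffs]

end PairSpan

section Interleave

variable (R : Type*) [Semiring R] (n : ℕ)

def interleave : (Fin n → R) × (Fin n → R) →ₗ[R] Fin (2 * n) → R where
  toFun p r := if r.val % 2 = 0 then p.1 ⟨r / 2, by omega⟩ else p.2 ⟨r / 2, by omega⟩
  map_add' p p' := by ext r; by_cases h : r.val % 2 = 0 <;> simp [h]
  map_smul' a p := by ext r; by_cases h : r.val % 2 = 0 <;> simp [h]

theorem interleave_apply_even (p : (Fin n → R) × (Fin n → R)) (l : Fin n) :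
    interleave R n p ⟨2 * l, by omega⟩ = p.1 l := by
  simp [interleave]

theorem interleave_apply_odd (p : (Fin n → R) × (Fin n → R)) (l : Fin n) :
    interleave R n p ⟨2 * l + 1, by omega⟩ = p.2 l := by
  simp only [interleave, LinearMap.coe_mk, AddHom.coe_mk]
  rw [if_neg (by omega)]
  exact congrArg p.2 (Fin.ext (show (2 * l.val + 1) / 2 = l.val by omega))

theorem interleave_injective : Function.Injective (interleave R n) := by
  intro p p' h
  ext l
  · simpa only [interleave_apply_even] using congrFun h ⟨2 * l, by omega⟩
  · simpa only [interleave_apply_odd] using congrFun h ⟨2 * l + 1, by omega⟩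

end Interleave

theorem rank_persymMatrix (n k : ℕ) (α : Fin n → Fin (k + 1) → ZMod 2) :
    (persymMatrix n k α).rank = finrank (ZMod 2) (pairSpan (ZMod 2) fun j l => α l j) := by
  have hcol : (persymMatrix n k α).col =
      interleave (ZMod 2) n ∘ fun j : Fin k => ((fun l => α l j.castSucc), fun l => α l j.succ) := by
    ext j r
    simp only [Matrix.col_apply, persymMatrix, Matrix.of_apply, Function.comp_apply, interleave,
      LinearMap.coe_mk, AddHom.coe_mk]
    split_ifs with h <;> exact congrArg _ (Fin.ext (by simp; omega))
  rw [Matrix.rank_eq_finrank_span_cols, hcol, range_comp, ← map_span, pairSpan,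
    ← (Submodule.equivMapOfInjective _ (interleave_injective (ZMod 2) n) _).finrank_eq]

theorem Gamma_eq_evalCoeffs (n k i : ℕ) :
    (Gamma n k i : ℤ) = evalCoeffs (2 ^ n) (countPoly 2 i k) := by
  have e : {α : Fin n → Fin (k + 1) → ZMod 2 // (persymMatrix n k α).rank = i} ≃
      {u : Fin (k + 1) → Fin n → ZMod 2 // finrank (ZMod 2) (pairSpan (ZMod 2) u) = i} :=
    (Equiv.piComm _).subtypeEquiv fun α => by rw [rank_persymMatrix]; rfl
  rw [Gamma, Nat.card_congr e, natCard_finrank_pairSpan_eq]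
  simp

theorem stmt15_general (n : ℕ) :
    (Gamma n 10 8 : ℤ) =
      511 * 2 ^ (8 * n) + 171955 * 2 ^ (7 * n) - 897890 * 2 ^ (6 * n)
        - 38376240 * 2 ^ (5 * n) + 323250144 * 2 ^ (4 * n) + 271514880 * 2 ^ (3 * n)
        - 436135 * 2 ^ 14 * 2 ^ (2 * n) + 242795 * 2 ^ 16 * 2 ^ n - 4445 * 2 ^ 21 := by
  have hpoly : countPoly 2 8 10 = [-4445 * 2 ^ 21, 242795 * 2 ^ 16, -436135 * 2 ^ 14, 271514880,
      323250144, -38376240, -897890, 171955, 511, 0, 0] := by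
    decide +kernel
  rw [Gamma_eq_evalCoeffs, hpoly]
  simp only [evalCoeffs, pow_mul']
  ring

theorem stmt15 (n : ℕ) (hn : 4 ≤ n) :
    (Gamma n 10 8 : ℤ) =
      511 * 2 ^ (8 * n) + 171955 * 2 ^ (7 * n) - 897890 * 2 ^ (6 * n)
        - 38376240 * 2 ^ (5 * n) + 323250144 * 2 ^ (4 * n) + 271514880 * 2 ^ (3 * n)
        - 436135 * 2 ^ 14 * 2 ^ (2 * n) + 242795 * 2 ^ 16 * 2 ^ n - 4445 * 2 ^ 21 :=
  stmt15_general n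
end
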